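/- Let $\gamma>1$. Then there exists a constant $C>0$ such that for all $\rho\ge 0$: $\big|\sqrt{2h(\rho)}-|\rho-1|\big|\le C\,(\rho-1)^2\,\big(1+\rho^{(\gamma-3)^+}\big)$, where $(\gamma-3)^+=\max\{\gamma-3,0\}$. (Note $h(\rho)\ge 0$ for all $\rho\ge 0$, so the square root is defined.) -/

import Mathlib

noncomputable section

/-- Internal energy `h(ρ) = (ρ^γ - 1 - γ(ρ-1)) / (γ(γ-1))` (real powers). -/
def hfun (γ ρ : ℝ) : ℝ := (ρ ^ γ - 1 - γ * (ρ - 1)) / (γ * (γ - 1))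

/-!
Expanding `ρ ^ γ` to second order at `ρ = 1` gives `2 h(ρ) = (ρ - 1)² + O(ξ ^ (γ - 3) |ρ - 1|³)`
with `ξ` between `1` and `ρ`; for `ρ ≥ 1/2` the factor `ξ ^ (γ - 3)` is at most
`2 (1 + ρ ^ (γ - 3)⁺)`. Since `|√a - b| · b ≤ |a - b²|`, dividing by `b = |ρ - 1|` yields the
estimate for `ρ ≥ 1/2`. For `ρ < 1/2` both `√(2 h(ρ))` and `|ρ - 1|` are bounded while
`(ρ - 1)² ≥ 1/4`.
-/

open Real Set
open scoped Interval

theorem abs_le_mul_abs_sub_pow_succ_of_hasDerivAt {f f' : ℝ → ℝ} {a b C : ℝ} {n : ℕ}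
    (hC : 0 ≤ C) (hfa : f a = 0) (hf : ∀ y ∈ [[a, b]], HasDerivAt f (f' y) y)
    (hf' : ∀ y ∈ [[a, b]], |f' y| ≤ C * |y - a| ^ n) :
    ∀ x ∈ [[a, b]], |f x| ≤ C * |x - a| ^ (n + 1) := by
  intro x hx
  have hsub : [[a, x]] ⊆ [[a, b]] := uIcc_subset_uIcc_left hx
  have hmvt := convex_uIcc a x |>.norm_image_sub_le_of_norm_hasDerivWithin_le
    (fun y hy => (hf y (hsub hy)).hasDerivWithinAt)
    (fun y hy => (hf' y (hsub hy)).trans <| mul_le_mul_of_nonneg_left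
      (pow_le_pow_left₀ (abs_nonneg _) (abs_sub_left_of_mem_uIcc hy) n) hC)
    left_mem_uIcc right_mem_uIcc
  simpa [hfa, pow_succ, mul_assoc] using hmvt

/-- The mean value estimate iterated along the derivatives of the remainder; the factor `1/3!`
is dropped. -/
theorem abs_rpow_sub_taylor_two_le {p ρ M : ℝ} (hρ : 0 < ρ)
    (hM : ∀ y ∈ [[1, ρ]], |p * (p - 1) * (p - 2) * y ^ (p - 3)| ≤ M) :
    |ρ ^ p - 1 - p * (ρ - 1) - p * (p - 1) / 2 * (ρ - 1) ^ 2| ≤ M * |ρ - 1| ^ 3 := by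
  have hpos : ∀ y ∈ [[1, ρ]], 0 < y := fun y hy =>
    lt_of_lt_of_le (lt_min one_pos hρ) hy.1
  have hM0 : 0 ≤ M := (abs_nonneg _).trans (hM 1 left_mem_uIcc)
  have hrpow : ∀ q, ∀ y ∈ [[1, ρ]], HasDerivAt (fun t : ℝ => t ^ q) (q * y ^ (q - 1)) y :=
    fun q y hy => hasDerivAt_rpow_const (Or.inl (hpos y hy).ne')
  have hd2 : ∀ y ∈ [[1, ρ]], HasDerivAt (fun y => p * (p - 1) * (y ^ (p - 2) - 1))
      (p * (p - 1) * (p - 2) * y ^ (p - 3)) y := fun y hy =>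
    (((hrpow (p - 2) y hy).sub_const 1).const_mul (p * (p - 1))).congr_deriv (by ring_nf)
  have hd1 : ∀ y ∈ [[1, ρ]], HasDerivAt (fun y => p * (y ^ (p - 1) - 1 - (p - 1) * (y - 1)))
      (p * (p - 1) * (y ^ (p - 2) - 1)) y := fun y hy =>
    ((((hrpow (p - 1) y hy).sub_const 1).sub
      (((hasDerivAt_id y).sub_const 1).const_mul (p - 1))).const_mul p).congr_deriv (by ring_nf)
  have hd0 : ∀ y ∈ [[1, ρ]],
      HasDerivAt (fun y => y ^ p - 1 - p * (y - 1) - p * (p - 1) / 2 * (y - 1) ^ 2)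
      (p * (y ^ (p - 1) - 1 - (p - 1) * (y - 1))) y := fun y hy =>
    ((((hrpow p y hy).sub_const 1).sub (((hasDerivAt_id y).sub_const 1).const_mul p)).sub
      ((((hasDerivAt_id y).sub_const 1).pow 2).const_mul (p * (p - 1) / 2))).congr_deriv
      (by simp only [id, Nat.cast_ofNat]; ring)
  have h2 := abs_le_mul_abs_sub_pow_succ_of_hasDerivAt (n := 0) hM0 (by simp) hd2
    (by simpa using hM)
  have h1 := abs_le_mul_abs_sub_pow_succ_of_hasDerivAt hM0 (by simp) hd1 h2
  have h0 := abs_le_mul_abs_sub_pow_succ_of_hasDerivAt hM0 (by simp) hd0 h1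
  exact h0 ρ right_mem_uIcc

theorem rpow_le_two_mul_one_add_rpow_max {p ξ ρ : ℝ} (hp : -2 ≤ p) (hρ : 0 ≤ ρ)
    (hξ : 1 / 2 ≤ ξ) (hξρ : ξ ≤ max 1 ρ) : ξ ^ p ≤ 2 * (1 + ρ ^ max p 0) := by
  have hξ0 : 0 < ξ := by linarith
  rcases le_total p 0 with hp0 | hp0
  · rw [max_eq_right hp0, rpow_zero]
    calc ξ ^ p ≤ (1 / 2) ^ p := rpow_le_rpow_of_nonpos (by norm_num) hξ hp0
      _ = 2 ^ (-p) := by rw [one_div, inv_rpow zero_le_two, rpow_neg zero_le_two]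
      _ ≤ 2 ^ (2 : ℝ) := rpow_le_rpow_of_exponent_le one_le_two (by linarith)
      _ = 2 * (1 + 1) := by norm_num
  · rw [max_eq_left hp0]
    rcases le_max_iff.1 hξρ with hξ1 | hξρ
    · linarith [rpow_le_one hξ0.le hξ1 hp0, rpow_nonneg hρ p]
    · linarith [rpow_le_rpow hξ0.le hξρ hp0, rpow_nonneg hρ p]

theorem abs_sqrt_sub_le_of_abs_sub_sq_le {a b c : ℝ} (ha : 0 ≤ a) (hb : 0 ≤ b)
    (h : |a - b ^ 2| ≤ c * b ^ 2) : |√a - b| ≤ c * b := by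
  rcases hb.eq_or_lt with rfl | hb
  · have : a = 0 := by simpa using h
    simp [this]
  have hprod : |√a - b| * (√a + b) = |a - b ^ 2| := by
    rw [← abs_of_nonneg (by positivity : 0 ≤ √a + b), ← abs_mul]
    congr 1
    linear_combination mul_self_sqrt ha
  refine le_of_mul_le_mul_right ?_ hb
  calc |√a - b| * b ≤ |√a - b| * (√a + b) :=
        mul_le_mul_of_nonneg_left (by linarith [sqrt_nonneg a]) (abs_nonneg _)
    _ ≤ c * b * b := by rw [hprod]; linarith

theorem hfun_nonneg {γ ρ : ℝ} (hγ : 1 < γ) (hρ : 0 ≤ ρ) : 0 ≤ hfun γ ρ := by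
  have hbern : 1 + γ * (ρ - 1) ≤ ρ ^ γ := by
    simpa using one_add_mul_self_le_rpow_one_add (s := ρ - 1) (by linarith) hγ.le
  exact div_nonneg (by linarith) (by nlinarith)

theorem two_mul_hfun_le_of_le_one {γ ρ : ℝ} (hγ : 1 < γ) (hρ : 0 ≤ ρ) (hρ1 : ρ ≤ 1) :
    2 * hfun γ ρ ≤ 2 / (γ - 1) := by
  have hγ0 : 0 ≤ γ := by linarith
  have hnum : ρ ^ γ - 1 - γ * (ρ - 1) ≤ γ := by
    linarith [rpow_le_one hρ hρ1 hγ0, mul_nonneg hγ0 hρ]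
  rw [hfun, ← mul_div_assoc, div_le_div_iff₀ (by nlinarith) (by linarith)]
  nlinarith

theorem abs_two_mul_hfun_sub_sq_le {γ ρ : ℝ} (hγ : 1 < γ) (hρ : 1 / 2 ≤ ρ) :
    |2 * hfun γ ρ - (ρ - 1) ^ 2| ≤ 4 * |γ - 2| * (1 + ρ ^ max (γ - 3) 0) * |ρ - 1| ^ 3 := by
  have hγ0 : γ ≠ 0 := by linarith
  have hγ1 : γ - 1 ≠ 0 := by linarith
  have hγγ : 0 < γ * (γ - 1) := by nlinarith
  have htaylor := abs_rpow_sub_taylor_two_le (p := γ)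
    (M := γ * (γ - 1) * |γ - 2| * (2 * (1 + ρ ^ max (γ - 3) 0))) (by linarith) fun y hy => by
      have hy_half : 1 / 2 ≤ y := (le_min (by norm_num) hρ).trans hy.1
      have hy0 : 0 < y := by linarith
      rw [abs_mul, abs_mul, abs_of_pos hγγ, abs_of_pos (rpow_pos_of_pos hy0 _)]
      refine mul_le_mul_of_nonneg_left ?_ (mul_nonneg hγγ.le (abs_nonneg _))
      exact rpow_le_two_mul_one_add_rpow_max (by linarith) (by linarith) hy_half hy.2
  have heq : 2 * hfun γ ρ - (ρ - 1) ^ 2 =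
      2 / (γ * (γ - 1)) * (ρ ^ γ - 1 - γ * (ρ - 1) - γ * (γ - 1) / 2 * (ρ - 1) ^ 2) := by
    rw [hfun]; field_simp
  rw [heq, abs_mul, abs_of_pos (by positivity)]
  calc _ ≤ 2 / (γ * (γ - 1)) *
          (γ * (γ - 1) * |γ - 2| * (2 * (1 + ρ ^ max (γ - 3) 0)) * |ρ - 1| ^ 3) :=
        mul_le_mul_of_nonneg_left htaylor (by positivity)
    _ = _ := by field_simp; ring

theorem abs_sqrt_two_mul_hfun_sub_le_of_half_le {γ ρ : ℝ} (hγ : 1 < γ) (hρ : 1 / 2 ≤ ρ) :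
    abs (√(2 * hfun γ ρ) - |ρ - 1|) ≤ 4 * |γ - 2| * (ρ - 1) ^ 2 * (1 + ρ ^ max (γ - 3) 0) := by
  have hh := hfun_nonneg hγ (by linarith : 0 ≤ ρ)
  have hsq : |2 * hfun γ ρ - |ρ - 1| ^ 2| ≤
      4 * |γ - 2| * (1 + ρ ^ max (γ - 3) 0) * |ρ - 1| * |ρ - 1| ^ 2 := by
    rw [mul_assoc _ |ρ - 1|, ← pow_succ', sq_abs]
    exact abs_two_mul_hfun_sub_sq_le hγ hρ
  calc abs (√(2 * hfun γ ρ) - |ρ - 1|)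
      ≤ 4 * |γ - 2| * (1 + ρ ^ max (γ - 3) 0) * |ρ - 1| * |ρ - 1| :=
        abs_sqrt_sub_le_of_abs_sub_sq_le (by linarith) (abs_nonneg _) hsq
    _ = 4 * |γ - 2| * (ρ - 1) ^ 2 * (1 + ρ ^ max (γ - 3) 0) := by
        rw [← sq_abs (ρ - 1)]
        ring

theorem abs_sqrt_two_mul_hfun_sub_le_of_le_one {γ ρ : ℝ} (hγ : 1 < γ) (hρ : 0 ≤ ρ)
    (hρ1 : ρ ≤ 1) : abs (√(2 * hfun γ ρ) - |ρ - 1|) ≤ √(2 / (γ - 1)) + 1 := by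
  refine abs_sub_le_of_nonneg_of_le (sqrt_nonneg _) ?_ (abs_nonneg _) ?_
  · exact (sqrt_le_sqrt (two_mul_hfun_le_of_le_one hγ hρ hρ1)).trans
      (le_add_of_nonneg_right zero_le_one)
  · rw [abs_le]
    constructor <;> linarith [sqrt_nonneg (2 / (γ - 1))]

/-- For `γ > 1` there is `C > 0` with
`|√(2h(ρ)) - |ρ-1|| ≤ C (ρ-1)² (1 + ρ^((γ-3)⁺))` for all `ρ ≥ 0`. -/
theorem stmt_11 (γ : ℝ) (hγ : 1 < γ) :
    ∃ C > 0, ∀ ρ : ℝ, 0 ≤ ρ →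
      abs (Real.sqrt (2 * hfun γ ρ) - |ρ - 1|) ≤
        C * (ρ - 1) ^ 2 * (1 + ρ ^ max (γ - 3) 0) := by
  set K := √(2 / (γ - 1)) + 1
  refine ⟨4 * |γ - 2| + 4 * K, by positivity, fun ρ hρ => ?_⟩
  have hκ : 0 ≤ ρ ^ max (γ - 3) 0 := rpow_nonneg hρ _
  have hK : 0 ≤ K := by positivity
  rcases lt_or_ge ρ (1 / 2) with hρ' | hρ'
  · have hfar := abs_sqrt_two_mul_hfun_sub_le_of_le_one hγ hρ (by linarith)
    have hsq : 1 / 4 ≤ (ρ - 1) ^ 2 := by nlinarith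
    calc _ ≤ K := hfar
      _ ≤ 4 * K * (ρ - 1) ^ 2 * 1 := by nlinarith
      _ ≤ (4 * |γ - 2| + 4 * K) * (ρ - 1) ^ 2 * (1 + ρ ^ max (γ - 3) 0) := by
        gcongr <;> linarith [abs_nonneg (γ - 2)]
  · calc _ ≤ 4 * |γ - 2| * (ρ - 1) ^ 2 * (1 + ρ ^ max (γ - 3) 0) :=
          abs_sqrt_two_mul_hfun_sub_le_of_half_le hγ hρ'
      _ ≤ _ := by gcongr; linarith
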